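/- arXiv:math/0406233 — 2 statements merged into one kernel-verified Lean document; each statement's English description precedes it below -/
import Mathlib

section
/- Let E be a strictly convex Banach space, let τ be a Hausdorff topology on E, and let {T(p) : p ∈ ℝ₊ⁿ} be an n-parameter τ-continuous semigroup of nonexpansive mappings on a subset C of E possessing a common fixed point. Let p₁, …, pₙ ∈ ℝ₊ⁿ be linearly independent in the usual sense, let α₁, …, αₙ ∈ ℝ be such that {1, α₁, …, αₙ} is linearly independent over ℚ, and suppose p₀ := α₁p₁ + ⋯ + αₙpₙ ∈ ℝ₊ⁿ. Let λ₀, λ₁, …, λₙ ∈ (0,1) with λ₀ + λ₁ + ⋯ + λₙ = 1 and define S : C → E by Sx = λ₀T(p₀)x + λ₁T(p₁)x + ⋯ + λₙT(pₙ)x. Then S is nonexpansive and ⋂_{p ∈ ℝ₊ⁿ} F(T(p)) = F(S). -/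
open Module Filter Topology



lemma contains_line {V : Type} [NormedAddCommGroup V] [NormedSpace ℝ V] [FiniteDimensional ℝ V]
    (H : AddSubgroup V) (hc : IsClosed (H : Set V))
    (hnd : ∀ ε > 0, ∃ h ∈ H, h ≠ 0 ∧ ‖h‖ < ε) :
    ∃ u : V, u ≠ 0 ∧ ∀ t : ℝ, t • u ∈ H := by
  have hch : ∀ k : ℕ, ∃ h, h ∈ H ∧ h ≠ 0 ∧ ‖h‖ < 1 / (k + 1) := by
    intro k
    obtain ⟨h, hH, h0, hn⟩ := hnd (1 / (k + 1)) (by positivity)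
    exact ⟨h, hH, h0, hn⟩
  choose h hH h0 hn using hch
  have hpos : ∀ k, (0:ℝ) < ‖h k‖ := fun k => norm_pos_iff.mpr (h0 k)
  set u : ℕ → V := fun k => ‖h k‖⁻¹ • h k with hu
  have hus : ∀ k, u k ∈ Metric.sphere (0:V) 1 := by
    intro k
    simp [u, mem_sphere_iff_norm, norm_smul, abs_of_pos (inv_pos.mpr (hpos k)),
      inv_mul_cancel₀ (hpos k).ne']
  obtain ⟨w, hw, φ, hφ, hlim⟩ := (isCompact_sphere (0:V) 1).tendsto_subseq hus
  refine ⟨w, ?_, ?_⟩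
  · intro h
    rw [h] at hw
    simp at hw
  intro t
  have hr0 : Tendsto (fun k => ‖h (φ k)‖) atTop (𝓝 0) := by
    apply squeeze_zero (fun k => (hpos _).le) (fun k => (hn (φ k)).le.trans ?_)
    · exact tendsto_one_div_add_atTop_nhds_zero_nat
    · have h1 : (k:ℝ) + 1 ≤ (φ k : ℝ) + 1 := by
        have h2 : (k:ℝ) ≤ (φ k:ℝ) := by exact_mod_cast hφ.le_apply (x := k)
        linarith
      exact one_div_le_one_div_of_le (by positivity) h1
  have hc' : Tendsto (fun k => (⌊t / ‖h (φ k)‖⌋ : ℝ) * ‖h (φ k)‖) atTop (𝓝 t) := by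
    rw [← tendsto_sub_nhds_zero_iff]
    apply squeeze_zero_norm (a := fun k => ‖h (φ k)‖) ?_ hr0
    intro k
    set r := ‖h (φ k)‖ with hr
    have hrpos := hpos (φ k)
    have h1 : |(⌊t/r⌋:ℝ) - t/r| ≤ 1 := by
      have a1 := Int.floor_le (t/r)
      have a2 := Int.lt_floor_add_one (t/r)
      rw [abs_le]; constructor <;> [linarith; linarith]
    have : (⌊t/r⌋:ℝ) * r - t = ((⌊t/r⌋:ℝ) - t/r) * r := by
      field_simp
      rw [mul_sub, mul_div_assoc', mul_comm r t, mul_div_assoc, div_self (show r ≠ 0 from hrpos.ne'), mul_one]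
    rw [Real.norm_eq_abs, this, abs_mul, abs_of_pos hrpos]
    nlinarith [abs_nonneg ((⌊t/r⌋:ℝ) - t/r)]
  have hmem : ∀ k, (⌊t / ‖h (φ k)‖⌋ : ℝ) • ((‖h (φ k)‖) • u (φ k)) ∈ H := by
    intro k
    have : (‖h (φ k)‖) • u (φ k) = h (φ k) := smul_inv_smul₀ (hpos (φ k)).ne' _
    rw [this]
    have := zsmul_mem (hH (φ k)) ⌊t / ‖h (φ k)‖⌋
    rwa [← Int.cast_smul_eq_zsmul ℝ] at this
  have hlim2 : Tendsto (fun k => (⌊t / ‖h (φ k)‖⌋ : ℝ) • ((‖h (φ k)‖) • u (φ k)))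
      atTop (𝓝 (t • w)) := by
    have : ∀ k, (⌊t / ‖h (φ k)‖⌋ : ℝ) • ((‖h (φ k)‖) • u (φ k))
        = ((⌊t / ‖h (φ k)‖⌋ : ℝ) * ‖h (φ k)‖) • u (φ k) := by
      intro k; rw [smul_smul]
    simp only [this]
    exact hc'.smul hlim
  exact hc.mem_of_tendsto hlim2 (Eventually.of_forall hmem)



lemma exists_ann : ∀ (N : ℕ) (V : Type) [NormedAddCommGroup V] [NormedSpace ℝ V]
    [FiniteDimensional ℝ V], finrank ℝ V = N →
    ∀ (H : AddSubgroup V), IsClosed (H : Set V) → (H : Set V) ≠ Set.univ →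
    ∃ f : V →ₗ[ℝ] ℝ, f ≠ 0 ∧ ∀ h ∈ H, ∃ z : ℤ, f h = z := by
  intro N
  induction N using Nat.strong_induction_on with
  | _ N IH =>
  intro V _ _ _ hrk H hc hne
  by_cases hnd : ∀ ε > 0, ∃ h ∈ H, h ≠ 0 ∧ ‖h‖ < ε
  · -- H contains a line; quotient by it and induct
    obtain ⟨u, hu0, hline⟩ := contains_line H hc hnd
    set S : Submodule ℝ V := Submodule.span ℝ {u} with hS
    have hSH : (S : Set V) ⊆ (H : Set V) := by
      intro v hv
      obtain ⟨t, rfl⟩ := Submodule.mem_span_singleton.mp hv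
      exact hline t
    haveI hScl : IsClosed (S : Set V) := S.closed_of_finiteDimensional
    have hrkS : finrank ℝ S = 1 := finrank_span_singleton hu0
    have hrkQ : finrank ℝ (V ⧸ S) + 1 = N := by
      rw [← hrk, ← hrkS]
      exact S.finrank_quotient_add_finrank
    have hlt : finrank ℝ (V ⧸ S) < N := by omega
    set H' : AddSubgroup (V ⧸ S) := H.map S.mkQ.toAddMonoidHom with hH'
    set H'' := H'.topologicalClosure with hH''
    have hpre : S.mkQ ⁻¹' (H' : Set (V ⧸ S)) = (H : Set V) := by
      ext v
      constructor
      · rintro ⟨h, hh, heq⟩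
        have : v - h ∈ S := by
          rw [← Submodule.Quotient.eq]
          exact heq.symm
        have := add_mem hh (hSH this)
        simpa using this
      · intro hv
        exact ⟨v, hv, rfl⟩
    have hcont : Continuous S.mkQ := continuous_quot_mk
    have hopen : IsOpenMap S.mkQ := S.isOpenMap_mkQ
    have hne'' : (H'' : Set (V ⧸ S)) ≠ Set.univ := by
      intro habs
      apply hne
      have h1 : closure (H' : Set (V ⧸ S)) = Set.univ := habs
      have h2 := hopen.preimage_closure_eq_closure_preimage hcont (H' : Set (V ⧸ S))
      rw [hpre, hc.closure_eq, h1] at h2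
      rw [← h2]
      simp
    obtain ⟨g, hg0, hgz⟩ := IH _ hlt (V ⧸ S) rfl H'' H'.isClosed_topologicalClosure hne''
    refine ⟨g ∘ₗ S.mkQ, ?_, ?_⟩
    · intro habs
      apply hg0
      apply LinearMap.ext
      intro w
      obtain ⟨v, rfl⟩ := Submodule.Quotient.mk_surjective S w
      have := DFunLike.congr_fun habs v
      simpa using this
    · intro h hh
      exact hgz _ (H'.le_topologicalClosure ⟨h, hh, rfl⟩)
  · -- H is discrete
    push_neg at hnd
    obtain ⟨ε, hε, hiso⟩ := hnd
    set L : Submodule ℤ V := AddSubgroup.toIntSubmodule H with hL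
    have hLset : (L : Set V) = (H : Set V) := rfl
    haveI : DiscreteTopology L := by
      rw [discreteTopology_iff_isOpen_singleton_zero]
      have : ({0} : Set L) = (Subtype.val) ⁻¹' (Metric.ball (0:V) ε) := by
        ext x
        simp only [Set.mem_singleton_iff, Set.mem_preimage, Metric.mem_ball, dist_zero_right]
        constructor
        · intro h; rw [h]; simpa using hε
        · intro hlt
          by_contra hne0
          have hx0 : (x : V) ≠ 0 := by simpa using hne0
          have := hiso x x.2 hx0
          exact absurd hlt (not_lt.mpr this)
      rw [this]
      exact (Metric.isOpen_ball).preimage continuous_subtype_val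
    by_cases hsp : Submodule.span ℝ (H : Set V) = ⊤
    · -- full lattice
      haveI : IsZLattice ℝ L := ⟨by rw [hLset]; exact hsp⟩
      haveI : Nontrivial V := by
        rcases subsingleton_or_nontrivial V with hs | hn
        · exfalso
          apply hne
          ext x
          simp [Subsingleton.elim x 0, AddSubgroup.zero_mem]
        · exact hn
      haveI := ZLattice.module_free ℝ L
      set b := Free.chooseBasis ℤ L with hb
      set B := b.ofZLatticeBasis ℝ L with hB
      haveI : Nonempty (Free.ChooseBasisIndex ℤ L) := B.index_nonempty
      set i₀ : Free.ChooseBasisIndex ℤ L := Classical.arbitrary _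
      refine ⟨B.coord i₀, ?_, ?_⟩
      · intro habs
        have h1 : B.coord i₀ (B i₀) = 1 := by simp
        rw [habs] at h1
        simp at h1
      · intro h hh
        refine ⟨b.repr ⟨h, hh⟩ i₀, ?_⟩
        have := b.ofZLatticeBasis_repr_apply ℝ (L := L) ⟨h, hh⟩ i₀
        rw [Basis.coord_apply]
        rw [← hB] at this
        exact_mod_cast this
    · -- proper span: annihilate it
      have hlt : Submodule.span ℝ (H : Set V) < ⊤ := lt_top_iff_ne_top.mpr hsp
      obtain ⟨f, hf0, hf⟩ :=
        Submodule.exists_dual_map_eq_bot_of_lt_top hlt inferInstance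
      refine ⟨f, hf0, fun h hh => ⟨0, ?_⟩⟩
      have : f h ∈ (Submodule.span ℝ (H : Set V)).map f :=
        Submodule.mem_map_of_mem (Submodule.subset_span hh)
      rw [hf] at this
      simpa using this



lemma zkron {n : ℕ} (α : Fin n → ℝ)
    (hα : ∀ (ν₀ : ℤ) (ν : Fin n → ℤ),
      (ν₀ : ℝ) + ∑ i, (ν i : ℝ) * α i = 0 → ν₀ = 0 ∧ ν = 0) :
    ∀ (t : Fin n → ℝ) (ε : ℝ), 0 < ε →
      ∃ (k : ℤ) (m : Fin n → ℤ), ∀ j, |k * α j + m j - t j| < ε := by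
  set φ : ℤ × (Fin n → ℤ) →+ (Fin n → ℝ) :=
    AddMonoidHom.mk' (fun q => (q.1 : ℝ) • α + fun j => ((q.2 j : ℝ))) (by
      rintro ⟨a, ma⟩ ⟨b, mb⟩
      funext j
      simp only [Prod.fst_add, Prod.snd_add, Pi.add_apply, Pi.smul_apply, smul_eq_mul]
      push_cast
      ring) with hφ
  set Γ : AddSubgroup (Fin n → ℝ) := φ.range with hΓ
  have hdense : Dense (Γ : Set (Fin n → ℝ)) := by
    rw [dense_iff_closure_eq]
    by_contra hne
    obtain ⟨f, hf0, hfz⟩ := exists_ann (finrank ℝ (Fin n → ℝ)) (Fin n → ℝ) rfl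
      Γ.topologicalClosure Γ.isClosed_topologicalClosure (by
        intro habs
        apply hne
        exact habs)
    -- f is integer valued on the generators
    set e : Fin n → (Fin n → ℝ) := fun j i => if j = i then 1 else 0 with he
    have hsingle : ∀ j : Fin n, e j ∈ Γ := by
      intro j
      refine ⟨(0, fun i => if j = i then 1 else 0), ?_⟩
      funext i
      simp only [φ, e, AddMonoidHom.mk'_apply, Int.cast_zero, zero_smul, Pi.add_apply,
        Pi.zero_apply, zero_add]
      by_cases h : j = i <;> simp [h]
    have halpha : α ∈ Γ := by
      refine ⟨(1, 0), ?_⟩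
      funext i
      simp [φ]
    have hmem : ∀ v ∈ Γ, v ∈ Γ.topologicalClosure := fun v hv => Γ.le_topologicalClosure hv
    choose ν hν using fun j => hfz _ (hmem _ (hsingle j))
    obtain ⟨ν₀, hν₀⟩ := hfz _ (hmem _ halpha)
    have hfα : f α = ∑ j, α j * f (e j) := by
      conv_lhs => rw [pi_eq_sum_univ α]
      rw [map_sum]
      exact Finset.sum_congr rfl fun j _ => by rw [map_smul]; simp [e]
    have hrel : ((-ν₀ : ℤ) : ℝ) + ∑ j, ((ν j : ℝ)) * α j = 0 := by
      have hs : ∑ j, ((ν j : ℝ)) * α j = f α := by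
        rw [hfα]
        exact Finset.sum_congr rfl fun j _ => by rw [hν j]; ring
      rw [hs, hν₀]
      push_cast
      ring
    obtain ⟨-, hν_zero⟩ := hα (-ν₀) ν hrel
    apply hf0
    apply LinearMap.ext
    intro v
    rw [pi_eq_sum_univ v, map_sum]
    simp only [map_smul, smul_eq_mul, LinearMap.zero_apply]
    apply Finset.sum_eq_zero
    intro j _
    have hz : f (e j) = 0 := by
      rw [hν j, congrFun hν_zero j]
      simp
    rw [he] at hz
    rw [hz, mul_zero]
  intro t ε hε
  obtain ⟨y, hy⟩ := Metric.dense_iff.mp hdense t ε hε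
  obtain ⟨hyball, ⟨⟨k, m⟩, rfl⟩⟩ := hy
  refine ⟨k, m, fun j => ?_⟩
  have h1 := dist_le_pi_dist (φ (k, m)) t j
  have h2 : dist (φ (k, m)) t < ε := Metric.mem_ball.mp hyball
  have h3 : φ (k, m) j = k * α j + m j := by
    simp [φ, mul_comm]
  rw [Real.dist_eq, h3] at h1
  exact lt_of_le_of_lt h1 h2

lemma nkron_small {n : ℕ} (α : Fin n → ℝ) {ε : ℝ} (hε : 0 < ε) :
    ∃ d : ℕ, 1 ≤ d ∧ ∃ m : Fin n → ℤ, ∀ j, |d * α j + m j| < ε := by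
  obtain ⟨M, hM⟩ := exists_nat_gt (1/ε)
  have hM0 : 0 < M := by
    by_contra h
    push_neg at h
    interval_cases M
    simp at hM
    nlinarith [one_div_pos.mpr hε]
  have hMR : (0:ℝ) < M := by exact_mod_cast hM0
  set g : Fin (M^n + 1) → (Fin n → Fin M) := fun k j =>
    ⟨(⌊(M : ℝ) * Int.fract ((k:ℝ) * α j)⌋).toNat, by
      have h1 : (⌊(M : ℝ) * Int.fract ((k:ℝ) * α j)⌋) < M := by
        apply Int.floor_lt.mpr
        push_cast
        nlinarith [Int.fract_lt_one ((k:ℝ) * α j), Int.fract_nonneg ((k:ℝ) * α j)]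
      omega⟩ with hg
  have hcard : Fintype.card (Fin n → Fin M) < Fintype.card (Fin (M^n + 1)) := by
    simp [Fintype.card_fun]
  obtain ⟨a, b, hab, hgab⟩ := Fintype.exists_ne_map_eq_of_card_lt g hcard
  have main : ∀ (a b : Fin (M^n + 1)), a.val < b.val → g a = g b →
      ∃ d : ℕ, 1 ≤ d ∧ ∃ m : Fin n → ℤ, ∀ j, |d * α j + m j| < ε := by
    intro a b hlt hgeq
    refine ⟨b.val - a.val, by omega, fun j => ⌊(a.val:ℝ) * α j⌋ - ⌊(b.val:ℝ) * α j⌋, fun j => ?_⟩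
    have hj := congrFun hgeq j
    have hnn1 : 0 ≤ ⌊(M : ℝ) * Int.fract ((a.val:ℝ) * α j)⌋ :=
      Int.floor_nonneg.mpr (mul_nonneg hMR.le (Int.fract_nonneg _))
    have hnn2 : 0 ≤ ⌊(M : ℝ) * Int.fract ((b.val:ℝ) * α j)⌋ :=
      Int.floor_nonneg.mpr (mul_nonneg hMR.le (Int.fract_nonneg _))
    have hfl : ⌊(M : ℝ) * Int.fract ((a.val:ℝ) * α j)⌋ = ⌊(M : ℝ) * Int.fract ((b.val:ℝ) * α j)⌋ := by
      have := congrArg Fin.val hj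
      simp only [g] at this
      omega
    have hdiff : |Int.fract ((b.val:ℝ) * α j) - Int.fract ((a.val:ℝ) * α j)| < ε := by
      have l1 := Int.floor_le ((M : ℝ) * Int.fract ((a.val:ℝ) * α j))
      have l2 := Int.lt_floor_add_one ((M : ℝ) * Int.fract ((a.val:ℝ) * α j))
      have l3 := Int.floor_le ((M : ℝ) * Int.fract ((b.val:ℝ) * α j))
      have l4 := Int.lt_floor_add_one ((M : ℝ) * Int.fract ((b.val:ℝ) * α j))
      rw [hfl] at l1 l2
      have hεM : 1 < ε * (M:ℝ) := by
        have h2 : 1 / ε * ε < M * ε := mul_lt_mul_of_pos_right hM hε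
        rw [one_div_mul_cancel hε.ne'] at h2
        have h3 : (M:ℝ) * ε = ε * M := mul_comm _ _
        linarith
      rw [abs_lt]
      constructor <;> nlinarith
    have heq : ((b.val - a.val : ℕ) : ℝ) * α j
        + ((⌊(a.val:ℝ) * α j⌋ - ⌊(b.val:ℝ) * α j⌋ : ℤ) : ℝ)
        = Int.fract ((b.val:ℝ) * α j) - Int.fract ((a.val:ℝ) * α j) := by
      simp only [Int.fract]
      push_cast [Nat.cast_sub hlt.le]
      ring
    rw [heq]
    exact hdiff
  rcases Nat.lt_trichotomy a.val b.val with h | h | h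
  · exact main a b h hgab
  · exact absurd (Fin.ext h) hab
  · exact main b a h hgab.symm

lemma nkron {n : ℕ} (α : Fin n → ℝ)
    (hα : ∀ (ν₀ : ℤ) (ν : Fin n → ℤ),
      (ν₀ : ℝ) + ∑ i, (ν i : ℝ) * α i = 0 → ν₀ = 0 ∧ ν = 0) :
    ∀ (t : Fin n → ℝ) (ε : ℝ), 0 < ε →
      ∃ (k : ℕ) (m : Fin n → ℤ), ∀ j, |k * α j + m j - t j| < ε := by
  intro t ε hε
  obtain ⟨k, m, hk⟩ := zkron α hα t (ε/2) (by positivity)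
  rcases le_or_gt 0 k with hk0 | hk0
  · refine ⟨k.toNat, m, fun j => ?_⟩
    have h1 := hk j
    have h2 : ((k.toNat : ℕ) : ℝ) = (k : ℝ) := by
      exact_mod_cast congrArg (Int.cast : ℤ → ℝ) (Int.toNat_of_nonneg hk0)
    rw [h2]
    linarith [h1]
  · set K : ℕ := (-k).toNat with hK
    have hK1 : 1 ≤ K := by omega
    have hKR : (0:ℝ) < K := by exact_mod_cast (by omega : 0 < K)
    obtain ⟨d, hd1, m', hm'⟩ := nkron_small α (ε := ε / (2 * K)) (by positivity)
    refine ⟨(k + K * d).toNat, fun j => m j + K * m' j, fun j => ?_⟩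
    have hknn : 0 ≤ k + (K:ℤ) * d := by
      have : (K:ℤ) ≤ (K:ℤ) * d := by
        have : (1:ℤ) ≤ d := by exact_mod_cast hd1
        nlinarith
      omega
    have hcast : (((k + K * d).toNat : ℤ) : ℝ) = (k:ℝ) + (K:ℝ) * d := by
      rw [Int.toNat_of_nonneg hknn]
      push_cast
      ring
    have h1 := hk j
    have h2 := hm' j
    have h3 : |(K:ℝ) * (d * α j + m' j)| < ε/2 := by
      rw [abs_mul, abs_of_pos hKR]
      calc (K:ℝ) * |d * α j + m' j| < K * (ε / (2 * K)) :=
        mul_lt_mul_of_pos_left h2 hKR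
      _ = ε/2 := by field_simp
    have hrw : ((k + K * d).toNat : ℝ) * α j + ((m j + K * m' j : ℤ) : ℝ) - t j
        = (k * α j + m j - t j) + (K:ℝ) * (d * α j + m' j) := by
      have : (((k + K * d).toNat : ℕ) : ℝ) = (((k + K * d).toNat : ℤ) : ℝ) := by
        push_cast
        ring
      rw [this, hcast]
      push_cast
      ring
    rw [hrw]
    calc |(k * α j + m j - t j) + (K:ℝ) * (d * α j + m' j)|
        ≤ |k * α j + m j - t j| + |(K:ℝ) * (d * α j + m' j)| := abs_add_le _ _
    _ < ε/2 + ε/2 := add_lt_add h1 h3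
    _ = ε := by ring

lemma approx_lemma {n : ℕ} (α : Fin n → ℝ)
    (hα : ∀ (ν₀ : ℤ) (ν : Fin n → ℤ),
      (ν₀ : ℝ) + ∑ i, (ν i : ℝ) * α i = 0 → ν₀ = 0 ∧ ν = 0)
    (β : Fin n → ℝ) {ε : ℝ} (hε : 0 < ε) :
    ∃ (k₀ : ℕ) (m : Fin n → ℤ), 1 ≤ k₀ ∧
      ∀ j, 0 ≤ β j + k₀ * α j + m j ∧ β j + k₀ * α j + m j < ε := by
  obtain ⟨k, m, hk⟩ := nkron α hα (fun j => -β j - α j + ε/2) (ε/2) (by positivity)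
  refine ⟨k + 1, m, by omega, fun j => ?_⟩
  have := hk j
  rw [abs_lt] at this
  constructor
  · push_cast
    linarith [this.1]
  · push_cast
    linarith [this.2]

lemma sc_all_eq {E : Type*} [NormedAddCommGroup E] [NormedSpace ℝ E] [StrictConvexSpace ℝ E]
    {ι : Type*} [Fintype ι] (μ : ι → ℝ) (hμ : ∀ i, 0 < μ i) (hμs : ∑ i, μ i = 1)
    (a : ι → E) (r : ℝ) (hr : ‖∑ i, μ i • a i‖ = r) (ha : ∀ i, ‖a i‖ ≤ r) :
    ∀ i, a i = ∑ j, μ j • a j := by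
  classical
  have key : ∀ i, ‖a i‖ = r := by
    by_contra hcon
    push_neg at hcon
    obtain ⟨i₀, hi₀⟩ := hcon
    have hlt : ‖a i₀‖ < r := lt_of_le_of_ne (ha i₀) hi₀
    have h1 : ∑ i, μ i * ‖a i‖ < ∑ i, μ i * r := by
      apply Finset.sum_lt_sum
      · exact fun i _ => mul_le_mul_of_nonneg_left (ha i) (hμ i).le
      · exact ⟨i₀, Finset.mem_univ _, mul_lt_mul_of_pos_left hlt (hμ i₀)⟩
    have h2 : ∑ i, μ i * r = r := by
      rw [← Finset.sum_mul, hμs, one_mul]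
    have h3 : r ≤ ∑ i, μ i * ‖a i‖ := by
      calc r = ‖∑ i, μ i • a i‖ := hr.symm
      _ ≤ ∑ i, ‖μ i • a i‖ := norm_sum_le _ _
      _ = ∑ i, μ i * ‖a i‖ := by
        exact Finset.sum_congr rfl fun i _ => by rw [norm_smul, Real.norm_eq_abs, abs_of_pos (hμ i)]
    linarith
  rcases eq_or_lt_of_le (norm_nonneg (∑ i, μ i • a i) |>.trans hr.le) with hr0 | hr0
  · -- r = 0
    intro i
    have h1 : a i = 0 := by
      have := ha i
      rw [← hr0] at this
      exact norm_le_zero_iff.mp this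
    have h2 : ∑ j, μ j • a j = 0 := by
      have : ‖∑ j, μ j • a j‖ = 0 := by rw [hr, ← hr0]
      exact norm_eq_zero.mp this
    rw [h1, h2]
  · -- r > 0 : pairwise equality
    have pair : ∀ i j, a i = a j := by
      intro i j
      rcases eq_or_ne i j with rfl | hij
      · rfl
      have hub : ‖μ i • a i + μ j • a j‖ ≤ μ i * r + μ j * r := by
        calc ‖μ i • a i + μ j • a j‖ ≤ ‖μ i • a i‖ + ‖μ j • a j‖ := norm_add_le _ _
        _ = μ i * r + μ j * r := by
          rw [norm_smul, norm_smul, Real.norm_eq_abs, Real.norm_eq_abs,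
            abs_of_pos (hμ i), abs_of_pos (hμ j), key i, key j]
      have hsplit : ∑ l, μ l • a l = (μ i • a i + μ j • a j) +
          ∑ l ∈ (Finset.univ.erase i).erase j, μ l • a l := by
        rw [← Finset.add_sum_erase _ _ (Finset.mem_univ i)]
        have hjmem : j ∈ Finset.univ.erase i := Finset.mem_erase.mpr ⟨(Ne.symm hij), Finset.mem_univ _⟩
        rw [← Finset.add_sum_erase _ _ hjmem]
        abel
      have hrest : ∑ l ∈ (Finset.univ.erase i).erase j, μ l * r = (1 - μ i - μ j) * r := by
        have : ∑ l ∈ (Finset.univ.erase i).erase j, μ l = 1 - μ i - μ j := by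
          have e1 : ∑ l ∈ Finset.univ.erase i, μ l = 1 - μ i := by
            rw [← hμs, ← Finset.add_sum_erase _ _ (Finset.mem_univ i)]
            ring
          have hjmem : j ∈ Finset.univ.erase i := Finset.mem_erase.mpr ⟨(Ne.symm hij), Finset.mem_univ _⟩
          rw [← Finset.add_sum_erase _ _ hjmem] at e1
          linarith
        rw [← Finset.sum_mul, this]
      have hlb : μ i * r + μ j * r ≤ ‖μ i • a i + μ j • a j‖ := by
        have h4 : r ≤ ‖μ i • a i + μ j • a j‖ + (1 - μ i - μ j) * r := by
          calc r = ‖∑ l, μ l • a l‖ := hr.symm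
          _ ≤ ‖μ i • a i + μ j • a j‖ + ‖∑ l ∈ (Finset.univ.erase i).erase j, μ l • a l‖ := by
            rw [hsplit]; exact norm_add_le _ _
          _ ≤ ‖μ i • a i + μ j • a j‖ + (1 - μ i - μ j) * r := by
            gcongr
            calc ‖∑ l ∈ (Finset.univ.erase i).erase j, μ l • a l‖
                ≤ ∑ l ∈ (Finset.univ.erase i).erase j, ‖μ l • a l‖ := norm_sum_le _ _
            _ = ∑ l ∈ (Finset.univ.erase i).erase j, μ l * r := by
              exact Finset.sum_congr rfl fun l _ => by
                rw [norm_smul, Real.norm_eq_abs, abs_of_pos (hμ l), key l]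
            _ = (1 - μ i - μ j) * r := hrest
        linarith
      have heq : ‖μ i • a i + μ j • a j‖ = ‖μ i • a i‖ + ‖μ j • a j‖ := by
        have e2 : ‖μ i • a i‖ = μ i * r := by
          rw [norm_smul, Real.norm_eq_abs, abs_of_pos (hμ i), key i]
        have e3 : ‖μ j • a j‖ = μ j * r := by
          rw [norm_smul, Real.norm_eq_abs, abs_of_pos (hμ j), key j]
        rw [e2, e3]
        linarith
      have hray : SameRay ℝ (μ i • a i) (μ j • a j) := sameRay_iff_norm_add.mpr heq
      have hai0 : a i ≠ 0 := by
        intro h0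
        have hk := key i
        rw [h0, norm_zero] at hk
        exact hr0.ne hk
      have haj0 : a j ≠ 0 := by
        intro h0
        have hk := key j
        rw [h0, norm_zero] at hk
        exact hr0.ne hk
      have hray2 : SameRay ℝ (a i) (a j) := by
        have h1 : SameRay ℝ (a i) (μ i • a i) :=
          (SameRay.sameRay_pos_smul_left (a i) (hμ i)).symm
        have h2 : SameRay ℝ (μ j • a j) (a j) :=
          SameRay.sameRay_pos_smul_left (a j) (hμ j)
        have hA : SameRay ℝ (a i) (μ j • a j) :=
          h1.trans hray (fun h => absurd h (smul_ne_zero (hμ i).ne' hai0))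
        exact hA.trans h2 (fun h => absurd h (smul_ne_zero (hμ j).ne' haj0))
      exact hray2.eq_of_norm_eq (by rw [key i, key j])
    intro i
    have : ∀ j, μ j • a j = μ j • a i := fun j => by rw [pair j i]
    rw [Finset.sum_congr rfl fun j _ => this j, ← Finset.sum_smul, hμs, one_smul]

/-- in a strictly convex Banach space, for an n-parameter τ-continuous
semigroup of nonexpansive mappings on `C` possessing a common fixed point, with
`p₀, p₁, …, pₙ` and `α` as in the main theorem and `S = λ₀T(p₀) + λ₁T(p₁) + ⋯ + λₙT(pₙ)`
(`λ_j ∈ (0,1)`, `Σλ_j = 1`), `S` is nonexpansive and `⋂_{p ∈ ℝ₊ⁿ} F(T(p)) = F(S)`. -/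
theorem common_fixed_points_eq_fixed_points_of_convex_combination
    {n : ℕ} {E : Type*} [NormedAddCommGroup E] [NormedSpace ℝ E] [CompleteSpace E]
    [StrictConvexSpace ℝ E]
    (τ : TopologicalSpace E) (hτ : @T2Space E τ)
    (C : Set E) (T : (Fin n → ℝ) → E → E)
    (hmaps : ∀ p : Fin n → ℝ, (∀ i, 0 ≤ p i) → ∀ x ∈ C, T p x ∈ C)
    (hsemi : ∀ p q : Fin n → ℝ, (∀ i, 0 ≤ p i) → (∀ i, 0 ≤ q i) →
      ∀ x ∈ C, T (p + q) x = T p (T q x))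
    (hcont : ∀ x ∈ C,
      @ContinuousOn (Fin n → ℝ) E _ τ (fun p => T p x) {p | ∀ i, 0 ≤ p i})
    (hne : ∀ p : Fin n → ℝ, (∀ i, 0 ≤ p i) →
      ∀ x ∈ C, ∀ y ∈ C, ‖T p x - T p y‖ ≤ ‖x - y‖)
    (hcfp : ∃ z ∈ C, ∀ p : Fin n → ℝ, (∀ i, 0 ≤ p i) → T p z = z)
    (p : Fin n → Fin n → ℝ) (hp : ∀ j i, 0 ≤ p j i)
    (hli : ∀ lam : Fin n → ℝ, ∑ j, lam j • p j = 0 → lam = 0)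
    (α : Fin n → ℝ)
    (hα : ∀ (ν₀ : ℤ) (ν : Fin n → ℤ),
      (ν₀ : ℝ) + ∑ i, (ν i : ℝ) * α i = 0 → ν₀ = 0 ∧ ν = 0)
    (p₀ : Fin n → ℝ) (hp₀ : p₀ = ∑ j, α j • p j) (hp₀pos : ∀ i, 0 ≤ p₀ i)
    (lam₀ : ℝ) (lam : Fin n → ℝ)
    (hlam₀ : lam₀ ∈ Set.Ioo (0 : ℝ) 1) (hlam : ∀ j, lam j ∈ Set.Ioo (0 : ℝ) 1)
    (hsum : lam₀ + ∑ j, lam j = 1)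
    (S : E → E) (hS : ∀ x ∈ C, S x = lam₀ • T p₀ x + ∑ j, lam j • T (p j) x) :
    (∀ x ∈ C, ∀ y ∈ C, ‖S x - S y‖ ≤ ‖x - y‖) ∧
      (⋂ q ∈ {q : Fin n → ℝ | ∀ i, 0 ≤ q i}, {x ∈ C | T q x = x})
        = {x ∈ C | S x = x} := by
  classical
  obtain ⟨z, hzC, hz⟩ := hcfp
  -- S is nonexpansive
  have hSne : ∀ x ∈ C, ∀ y ∈ C, ‖S x - S y‖ ≤ ‖x - y‖ := by
    intro x hx y hy
    rw [hS x hx, hS y hy]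
    have hrw : lam₀ • T p₀ x + ∑ j, lam j • T (p j) x
        - (lam₀ • T p₀ y + ∑ j, lam j • T (p j) y)
        = lam₀ • (T p₀ x - T p₀ y) + ∑ j, lam j • (T (p j) x - T (p j) y) := by
      simp only [smul_sub, Finset.sum_sub_distrib]
      abel
    rw [hrw]
    calc ‖lam₀ • (T p₀ x - T p₀ y) + ∑ j, lam j • (T (p j) x - T (p j) y)‖
        ≤ ‖lam₀ • (T p₀ x - T p₀ y)‖ + ∑ j, ‖lam j • (T (p j) x - T (p j) y)‖ :=
          (norm_add_le _ _).trans (by gcongr; exact norm_sum_le _ _)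
    _ ≤ lam₀ * ‖x - y‖ + ∑ j, lam j * ‖x - y‖ := by
          gcongr with j hj
          · rw [norm_smul, Real.norm_eq_abs, abs_of_pos hlam₀.1]
            exact mul_le_mul_of_nonneg_left (hne p₀ hp₀pos x hx y hy) hlam₀.1.le
          · rw [norm_smul, Real.norm_eq_abs, abs_of_pos (hlam j).1]
            exact mul_le_mul_of_nonneg_left (hne (p j) (hp j) x hx y hy) (hlam j).1.le
    _ = ‖x - y‖ := by rw [← Finset.sum_mul, ← add_mul, hsum, one_mul]
  refine ⟨hSne, ?_⟩
  ext x
  simp only [Set.mem_iInter, Set.mem_setOf_eq]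
  constructor
  · -- common fixed point implies fixed point of S
    intro hx
    obtain ⟨hxC, -⟩ := hx 0 (fun i => le_refl 0)
    refine ⟨hxC, ?_⟩
    rw [hS x hxC, (hx p₀ hp₀pos).2]
    have : ∀ j, lam j • T (p j) x = lam j • x := fun j => by rw [(hx (p j) (hp j)).2]
    rw [Finset.sum_congr rfl fun j _ => this j, ← Finset.sum_smul, ← add_smul, hsum, one_smul]
  · -- fixed point of S is a common fixed point
    rintro ⟨hxC, hSx⟩
    -- Step 1: x is fixed by T p₀ and T (p j)
    set r : ℝ := ‖x - z‖ with hr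
    set μ : Fin (n+1) → ℝ := Fin.cons lam₀ lam with hμ
    set a : Fin (n+1) → E := Fin.cons (T p₀ x - z) (fun j => T (p j) x - z) with ha
    have hμpos : ∀ i, 0 < μ i := by
      intro i
      refine Fin.cases ?_ ?_ i
      · exact hlam₀.1
      · intro j; exact (hlam j).1
    have hμsum : ∑ i, μ i = 1 := by
      rw [hμ, Fin.sum_cons, hsum]
    have hsum_eq : ∑ i, μ i • a i = x - z := by
      rw [hμ, ha, Fin.sum_univ_succ]
      simp only [Fin.cons_succ, Fin.cons_zero]
      have h1 : ∑ j, lam j • (T (p j) x - z) = ∑ j, lam j • T (p j) x - (∑ j, lam j) • z := by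
        simp only [smul_sub, Finset.sum_sub_distrib, Finset.sum_smul]
      rw [h1, smul_sub]
      have h2 : S z = z := by
        rw [hS z hzC, hz p₀ hp₀pos]
        have : ∀ j, lam j • T (p j) z = lam j • z := fun j => by rw [hz (p j) (hp j)]
        rw [Finset.sum_congr rfl fun j _ => this j, ← Finset.sum_smul, ← add_smul, hsum, one_smul]
      have h3 : lam₀ • T p₀ x + ∑ j, lam j • T (p j) x = x := by
        rw [← hS x hxC, hSx]
      calc lam₀ • T p₀ x - lam₀ • z + (∑ j, lam j • T (p j) x - (∑ j, lam j) • z)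
          = (lam₀ • T p₀ x + ∑ j, lam j • T (p j) x) - (lam₀ + ∑ j, lam j) • z := by
            rw [add_smul]; abel
      _ = x - z := by rw [h3, hsum, one_smul]
    have hnorm_le : ∀ i, ‖a i‖ ≤ r := by
      intro i
      refine Fin.cases ?_ ?_ i
      · show ‖T p₀ x - z‖ ≤ r
        rw [← hz p₀ hp₀pos]
        exact hne p₀ hp₀pos x hxC z hzC
      · intro j
        show ‖T (p j) x - z‖ ≤ r
        rw [← hz (p j) (hp j)]
        exact hne (p j) (hp j) x hxC z hzC
    have hall := sc_all_eq μ hμpos hμsum a r (by rw [hsum_eq]) hnorm_le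
    have hfix₀ : T p₀ x = x := by
      have h := hall 0
      rw [hsum_eq] at h
      simp only [ha, Fin.cons_zero] at h
      exact sub_left_inj.mp h
    have hfixj : ∀ j, T (p j) x = x := by
      intro j
      have h := hall j.succ
      rw [hsum_eq] at h
      simp only [ha, Fin.cons_succ] at h
      exact sub_left_inj.mp h
    -- Step 2: the coefficient linear map and its surjectivity
    set Lp : (Fin n → ℝ) →ₗ[ℝ] (Fin n → ℝ) :=
      { toFun := fun c => ∑ j, c j • p j
        map_add' := by
          intro c d
          simp only [Pi.add_apply, add_smul, Finset.sum_add_distrib]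
        map_smul' := by
          intro t c
          simp only [Pi.smul_apply, smul_eq_mul, RingHom.id_apply, Finset.smul_sum, smul_smul] } with hLp
    have hLpinj : Function.Injective Lp := by
      rw [← LinearMap.ker_eq_bot]
      apply (Submodule.eq_bot_iff _).mpr
      intro c hc
      exact hli c hc
    have hLpsurj : Function.Surjective Lp := LinearMap.surjective_of_injective hLpinj
    have hLpapp : ∀ (c : Fin n → ℝ) (i : Fin n), Lp c i = ∑ j, c j * p j i := by
      intro c i
      simp only [hLp, LinearMap.coe_mk, AddHom.coe_mk, Finset.sum_apply, Pi.smul_apply,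
        smul_eq_mul]
    have hLpnonneg : ∀ c : Fin n → ℝ, (∀ j, 0 ≤ c j) → ∀ i, 0 ≤ Lp c i := by
      intro c hc i
      rw [hLpapp]
      exact Finset.sum_nonneg fun j _ => mul_nonneg (hc j) (hp j i)
    -- Step 3: the set of fixed nonnegative parameters is an additive subsemigroup
    set P : (Fin n → ℝ) → Prop := fun w => (∀ i, 0 ≤ w i) ∧ T w x = x with hP
    have hPadd : ∀ w w', P w → P w' → P (w + w') := by
      rintro w w' ⟨hw1, hw2⟩ ⟨hw1', hw2'⟩
      refine ⟨fun i => add_nonneg (hw1 i) (hw1' i), ?_⟩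
      rw [hsemi w w' hw1 hw1' x hxC, hw2', hw2]
    have hPp₀ : P p₀ := ⟨hp₀pos, hfix₀⟩
    have hPpj : ∀ j, P (p j) := fun j => ⟨hp j, hfixj j⟩
    have hPsm : ∀ (w : Fin n → ℝ), P w → ∀ k : ℕ, P ((k + 1 : ℕ) • w) := by
      intro w hw k
      induction k with
      | zero => simpa using hw
      | succ k ih =>
        have : ((k + 1 + 1 : ℕ) • w) = ((k + 1 : ℕ) • w) + w := by
          rw [add_nsmul, one_nsmul]
        rw [this]
        exact hPadd _ _ ih hw
    have hPsmR : ∀ (w : Fin n → ℝ), P w → ∀ k : ℕ, P (((k:ℝ) + 1) • w) := by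
      intro w hw k
      have h5 := hPsm w hw k
      rw [← Nat.cast_smul_eq_nsmul ℝ] at h5
      have hcast : (((k + 1 : ℕ) : ℝ)) • w = ((k:ℝ) + 1) • w := by
        norm_cast
      rwa [hcast] at h5
    have hPsum : ∀ (k : Fin n → ℕ) (u : Finset (Fin n)) (w : Fin n → ℝ), P w →
        P (w + ∑ j ∈ u, ((k j : ℝ) + 1) • p j) := by
      intro k u
      induction u using Finset.induction_on with
      | empty => intro w hw; simpa using hw
      | @insert j₀ u hnotmem ih =>
        intro w hw
        rw [Finset.sum_insert hnotmem, ← add_assoc]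
        exact ih _ (hPadd _ _ hw (hPsmR (p j₀) (hPpj j₀) (k j₀)))
    have hLpsplit : ∀ (t : ℝ) (c : Fin n → ℝ),
        Lp (fun j => t * α j + c j) = t • p₀ + ∑ j, c j • p j := by
      intro t c
      rw [hp₀, Finset.smul_sum]
      simp only [hLp, LinearMap.coe_mk, AddHom.coe_mk, add_smul, Finset.sum_add_distrib,
        smul_smul]
    -- Step 4: for every q ≥ 0, T q x = T 0 x
    have key : ∀ q' : Fin n → ℝ, (∀ i, 0 ≤ q' i) → T q' x = T 0 x := by
      intro q hq
      obtain ⟨β, hβ⟩ := hLpsurj q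
      have hap : ∀ N : ℕ, ∃ (k₀ : ℕ) (m : Fin n → ℤ), 1 ≤ k₀ ∧
          ∀ j, 0 ≤ β j + k₀ * α j + m j ∧ β j + k₀ * α j + m j < 1/(N+1) :=
        fun N => approx_lemma α hα β (by positivity)
      choose kf mf hkf hvf using hap
      set v : ℕ → Fin n → ℝ := fun N j => β j + kf N * α j + mf N j with hv
      have hstep : ∀ N, T q x = T (Lp (v N)) x := by
        intro N
        set cg : Fin n → ℝ := fun j => ((kf N : ℝ) + 1) * α j + (((mf N j).toNat : ℝ) + 1)
          with hcg
        set cs : Fin n → ℝ := fun j => 1 * α j + (((-(mf N j)).toNat : ℝ) + 1) with hcs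
        have hPg : P (Lp cg) := by
          rw [hcg, hLpsplit]
          exact hPsum _ Finset.univ _ (hPsmR p₀ hPp₀ (kf N))
        have hPs : P (Lp cs) := by
          rw [hcs, hLpsplit, one_smul]
          exact hPsum _ Finset.univ _ hPp₀
        have hcoef : β + cg = v N + cs := by
          funext j
          simp only [Pi.add_apply, hcg, hcs, hv]
          have hz1 : ((mf N j).toNat : ℤ) - ((-(mf N j)).toNat : ℤ) = mf N j := by omega
          have hz2 : ((mf N j).toNat : ℝ) - ((-(mf N j)).toNat : ℝ) = (mf N j : ℝ) := by
            exact_mod_cast congrArg (Int.cast : ℤ → ℝ) hz1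
          push_cast
          linarith
        have hkey : q + Lp cg = Lp (v N) + Lp cs := by
          rw [← hβ, ← map_add, ← map_add, hcoef]
        have hvnn : ∀ i, 0 ≤ Lp (v N) i := hLpnonneg (v N) (fun j => (hvf N j).1)
        calc T q x = T q (T (Lp cg) x) := by rw [hPg.2]
        _ = T (q + Lp cg) x := (hsemi q (Lp cg) hq hPg.1 x hxC).symm
        _ = T (Lp (v N) + Lp cs) x := by rw [hkey]
        _ = T (Lp (v N)) (T (Lp cs) x) := hsemi _ _ hvnn hPs.1 x hxC
        _ = T (Lp (v N)) x := by rw [hPs.2]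
      -- Step 5: pass to the limit
      have hv0 : Tendsto v atTop (𝓝 0) := by
        rw [tendsto_pi_nhds]
        intro j
        have h0j : (0 : Fin n → ℝ) j = 0 := rfl
        rw [h0j]
        apply squeeze_zero (fun N => (hvf N j).1) (fun N => (hvf N j).2.le)
        exact tendsto_one_div_add_atTop_nhds_zero_nat
      have hLpcont : Continuous Lp := Lp.continuous_of_finiteDimensional
      have hLv : Tendsto (fun N => Lp (v N)) atTop
          (𝓝[{q' : Fin n → ℝ | ∀ i, 0 ≤ q' i}] 0) := by
        rw [tendsto_nhdsWithin_iff]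
        constructor
        · have h6 := (hLpcont.tendsto 0).comp hv0
          rwa [map_zero] at h6
        · exact Eventually.of_forall fun N =>
            (fun i => hLpnonneg (v N) (fun j => (hvf N j).1) i)
      have hTcont := (hcont x hxC) 0 (fun i => le_refl 0)
      have hlim := hTcont.tendsto.comp hLv
      have hfun : ((fun p' => T p' x) ∘ fun N => Lp (v N)) = fun _ : ℕ => T q x :=
        funext fun N => (hstep N).symm
      rw [hfun] at hlim
      exact @tendsto_nhds_unique E ℕ τ hτ (fun _ => T q x) atTop (T q x) (T 0 x) _
        (@tendsto_const_nhds E τ ℕ (T q x) atTop) hlim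
    have hT0 : T 0 x = x := by
      rw [← key p₀ hp₀pos]
      exact hfix₀
    intro q hq
    exact ⟨hxC, (key q hq).trans hT0⟩
end

section
/- Let E = ℝ with its usual topology, C = ℝ, and define a 2-parameter continuous semigroup {T(p) : p ∈ ℝ₊²} of nonexpansive mappings on C by T(λ₁e₁ + λ₂e₂)x = x + λ₁ − λ₂ for λ₁, λ₂ ∈ [0,∞) and x ∈ ℝ. Define S : ℝ → ℝ by Sx = ((√2+√3+1)/6)·T(√2 e₁ + √3 e₂)x + ((3−√2)/6)·T(e₁)x + ((2−√3)/6)·T(e₂)x. Then ⋂_{p ∈ ℝ₊²} F(T(p)) = ∅, while F(S) = ℝ; in particular the common fixed point set is strictly contained in F(S). -/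
/-- counterexample: for the 2-parameter semigroup on ℝ given by
`T(λ₁e₁ + λ₂e₂)x = x + λ₁ − λ₂` and the convex combination
`S = ((√2+√3+1)/6)T(√2e₁ + √3e₂) + ((3−√2)/6)T(e₁) + ((2−√3)/6)T(e₂)`,
the common fixed point set is empty while `F(S) = ℝ`; in particular the common fixed
point set is strictly contained in `F(S)`. -/
theorem counterexample_two_parameter
    (T : (Fin 2 → ℝ) → ℝ → ℝ)
    (hT : ∀ p : Fin 2 → ℝ, (∀ i, 0 ≤ p i) → ∀ x : ℝ, T p x = x + p 0 - p 1)
    (S : ℝ → ℝ)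
    (hS : ∀ x : ℝ, S x =
      ((Real.sqrt 2 + Real.sqrt 3 + 1) / 6) * T ![Real.sqrt 2, Real.sqrt 3] x
        + ((3 - Real.sqrt 2) / 6) * T ![1, 0] x
        + ((2 - Real.sqrt 3) / 6) * T ![0, 1] x) :
    (⋂ p ∈ {p : Fin 2 → ℝ | ∀ i, 0 ≤ p i}, {x : ℝ | T p x = x}) = ∅ ∧
      {x : ℝ | S x = x} = Set.univ ∧
      (⋂ p ∈ {p : Fin 2 → ℝ | ∀ i, 0 ≤ p i}, {x : ℝ | T p x = x})
        ⊂ {x : ℝ | S x = x} := by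
  have h2 : Real.sqrt 2 ^ 2 = 2 := Real.sq_sqrt (by norm_num)
  have h3 : Real.sqrt 3 ^ 2 = 3 := Real.sq_sqrt (by norm_num)
  have h2n : (0:ℝ) ≤ Real.sqrt 2 := Real.sqrt_nonneg _
  have h3n : (0:ℝ) ≤ Real.sqrt 3 := Real.sqrt_nonneg _
  have hEmpty : (⋂ p ∈ {p : Fin 2 → ℝ | ∀ i, 0 ≤ p i}, {x : ℝ | T p x = x}) = ∅ := by
    ext x
    simp only [Set.mem_iInter, Set.mem_empty_iff_false, iff_false, Set.mem_setOf_eq]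
    intro h
    have := h ![1, 0] (by intro i; fin_cases i <;> norm_num)
    rw [hT ![1,0] (by intro i; fin_cases i <;> norm_num) x] at this
    simp at this
  have hSfix : {x : ℝ | S x = x} = Set.univ := by
    ext x
    simp only [Set.mem_setOf_eq, Set.mem_univ, iff_true]
    rw [hS x, hT ![Real.sqrt 2, Real.sqrt 3] (by intro i; fin_cases i <;> simpa) x,
      hT ![1,0] (by intro i; fin_cases i <;> norm_num) x,
      hT ![0,1] (by intro i; fin_cases i <;> norm_num) x]
    simp only [Matrix.cons_val_zero, Matrix.cons_val_one, Matrix.head_cons]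
    nlinarith [h2, h3]
  refine ⟨hEmpty, hSfix, ?_⟩
  rw [hEmpty, hSfix]
  refine ⟨Set.empty_subset _, ?_⟩
  intro hsub
  exact absurd (hsub (Set.mem_univ 0)) (Set.notMem_empty 0)
end
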